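/- η-law for xCL_fg (value form): for every value v, v ≲ctx S''([K'([I])],[v]) and S''([K'([I])],[v]) ≲ctx v (both in the value sort). -/

import Mathlib

namespace FG

mutual
/-- Values of the fine-grain call-by-value combinatory logic xCL_fg. -/
inductive V : Type
  | I : V
  | K : V
  | S : V
  | K1 (t : C) : V
  | S1 (t : C) : V
  | S2 (s t : C) : V
/-- Computations of xCL_fg. -/
inductive C : Type
  | ret (v : V) : C            -- [v]
  | bull (t s : C) : C         -- t • s
  | rtri (v : V) (s : C) : C   -- v ▷ s
  | ltri (t : C) (v : V) : C   -- t ◁ v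
  | circ (v w : V) : C         -- v ∘ w
end

/-- Labeled transitions `v —u→ t` from values to computations (`LStep v u t`). -/
inductive LStep : V → V → C → Prop
  | S (v : V) : LStep .S v (.ret (.S1 (.ret v)))
  | S1 (t : C) (v : V) : LStep (.S1 t) v (.ret (.S2 t (.ret v)))
  | S2 (t s : C) (v : V) : LStep (.S2 t s) v (.bull (.ltri t v) (.ltri s v))
  | K (v : V) : LStep .K v (.ret (.K1 (.ret v)))
  | K1 (t : C) (v : V) : LStep (.K1 t) v t
  | I (v : V) : LStep .I v (.ret v)

/-- Unlabeled transitions from computations to values: `t → v`. -/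
inductive StepV : C → V → Prop
  | ret (v : V) : StepV (.ret v) v

/-- Unlabeled transitions from computations to computations: `t → t'`. -/
inductive StepC : C → C → Prop
  | bullL {t t' : C} (s : C) : StepC t t' → StepC (.bull t s) (.bull t' s)
  | bullV {t : C} {v : V} (s : C) : StepV t v → StepC (.bull t s) (.rtri v s)
  | ltriL {t t' : C} (v : V) : StepC t t' → StepC (.ltri t v) (.ltri t' v)
  | ltriV {t : C} {v : V} (w : V) : StepV t v → StepC (.ltri t w) (.circ v w)
  | rtriR {s s' : C} (v : V) : StepC s s' → StepC (.rtri v s) (.rtri v s')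
  | rtriV {s : C} {w : V} (v : V) : StepV s w → StepC (.rtri v s) (.circ v w)
  | circ {v w : V} {t : C} : LStep v w t → StepC (.circ v w) t

/-- `t ⇒ t'` between computations. -/
def StepsC : C → C → Prop := Relation.ReflTransGen StepC

/-- `t ⇒ v`: `t` reduces in finitely many steps to the value `v`. -/
def StepsV (t : C) (v : V) : Prop := ∃ t', StepsC t t' ∧ StepV t' v

/-- `t⇓`: the computation `t` reduces to some value. -/
def ConvC (t : C) : Prop := ∃ v, StepsV t v

/-- Applicative simulations for xCL_fg. -/
def IsSim (RV : V → V → Prop) (RC : C → C → Prop) : Prop :=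
  (∀ v w, RV v w → ∀ u t, LStep v u t → ∃ s, LStep w u s ∧ RC t s) ∧
  (∀ t s, RC t s →
    (∀ v, StepV t v → ∃ w, StepsV s w ∧ RV v w) ∧
    (∀ t', StepC t t' → ∃ s', StepsC s s' ∧ RC t' s'))

/-- Applicative similarity on values. -/
def AppSimV (v w : V) : Prop := ∃ RV RC, IsSim RV RC ∧ RV v w

/-- Applicative similarity on computations. -/
def AppSimC (t s : C) : Prop := ∃ RV RC, IsSim RV RC ∧ RC t s

/-- A sorted relation is a congruence if it is compatible with all operators of both sorts. -/
def IsCong (RV : V → V → Prop) (RC : C → C → Prop) : Prop :=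
  RV .S .S ∧ RV .K .K ∧ RV .I .I ∧
  (∀ t s, RC t s → RV (.K1 t) (.K1 s)) ∧
  (∀ t s, RC t s → RV (.S1 t) (.S1 s)) ∧
  (∀ t s t' s', RC t s → RC t' s' → RV (.S2 t t') (.S2 s s')) ∧
  (∀ v w, RV v w → RC (.ret v) (.ret w)) ∧
  (∀ t s t' s', RC t s → RC t' s' → RC (.bull t t') (.bull s s')) ∧
  (∀ v w t s, RV v w → RC t s → RC (.rtri v t) (.rtri w s)) ∧
  (∀ v w t s, RV v w → RC t s → RC (.ltri t v) (.ltri s w)) ∧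
  (∀ v w v' w', RV v w → RV v' w' → RC (.circ v v') (.circ w w'))

/-- Containment in the preorder `O` (the value component of `O` is total). -/
def SubO (RV : V → V → Prop) (RC : C → C → Prop) : Prop :=
  (∀ v w, RV v w → True) ∧ (∀ t s, RC t s → ConvC t → ConvC s)

/-- The contextual preorder (value sort): the greatest congruence contained in `O`. -/
def CtxLeV (v w : V) : Prop := ∃ RV RC, IsCong RV RC ∧ SubO RV RC ∧ RV v w

/-- The contextual preorder (computation sort). -/
def CtxLeC (t s : C) : Prop := ∃ RV RC, IsCong RV RC ∧ SubO RV RC ∧ RC t s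

/-- The step-indexed approximations `Lⁿ = (Lⁿ_v, Lⁿ_c)`. -/
def LrelN : ℕ → (V → V → Prop) × (C → C → Prop)
  | 0 => (fun _ _ => True, fun _ _ => True)
  | n+1 =>
    ( fun v w => ∀ u z, (LrelN n).1 u z → ∀ t, LStep v u t →
        ∃ s, LStep w z s ∧ (LrelN n).2 t s,
      fun t s =>
        (∀ v, StepV t v → ∃ w, StepsV s w ∧ (LrelN n).1 v w) ∧
        (∀ t', StepC t t' → ∃ s', StepsC s s' ∧ (LrelN n).2 t' s') )

/-- The step-indexed logical relation, value sort: `L_v = ⋂ₙ Lⁿ_v`. -/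
def LV (v w : V) : Prop := ∀ n, (LrelN n).1 v w

/-- The step-indexed logical relation, computation sort: `L_c = ⋂ₙ Lⁿ_c`. -/
def LC (t s : C) : Prop := ∀ n, (LrelN n).2 t s

end FG

/-!
The η-expansion `η v = S''([K'([I])],[v])` satisfies `η v ∘ u ⇒ I ▷ (v ∘ u)`, which is `v ∘ u` up
to an identity redex. So the least congruence relating each value to its η-expansion in both
directions, and closed under adding or removing a leading `I ▷ _` and under expanding its left
side by a reduction step, is a weak simulation: every step of the left side is matched by finitely
many steps of the right side. Matching reduction to a value shows that the relation is contained
in `O`, and being a congruence it is contained in `≲ctx`.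
-/

namespace FG

def eta (v : V) : V := .S2 (.ret (.K1 (.ret .I))) (.ret v)

mutual
inductive EtaV : V → V → Prop
  | S : EtaV .S .S
  | K : EtaV .K .K
  | I : EtaV .I .I
  | K1 {t s} : EtaC t s → EtaV (.K1 t) (.K1 s)
  | S1 {t s} : EtaC t s → EtaV (.S1 t) (.S1 s)
  | S2 {t s t' s'} : EtaC t s → EtaC t' s' → EtaV (.S2 t t') (.S2 s s')
  | expand {v w} : EtaV v w → EtaV v (eta w)
  | contract {v w} : EtaV v w → EtaV (eta v) w
inductive EtaC : C → C → Prop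
  | ret {v w} : EtaV v w → EtaC (.ret v) (.ret w)
  | bull {t s t' s'} : EtaC t s → EtaC t' s' → EtaC (.bull t t') (.bull s s')
  | rtri {v w t s} : EtaV v w → EtaC t s → EtaC (.rtri v t) (.rtri w s)
  | ltri {v w t s} : EtaV v w → EtaC t s → EtaC (.ltri t v) (.ltri s w)
  | circ {v w v' w'} : EtaV v w → EtaV v' w' → EtaC (.circ v v') (.circ w w')
  | idL {t s} : EtaC t s → EtaC (.rtri .I t) s
  | idR {t s} : EtaC t s → EtaC t (.rtri .I s)
  | headExpand {t t' s} : StepC t t' → EtaC t' s → EtaC t s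
end

mutual
theorem EtaV.refl : (v : V) → EtaV v v
  | .I => .I
  | .K => .K
  | .S => .S
  | .K1 t => .K1 (EtaC.refl t)
  | .S1 t => .S1 (EtaC.refl t)
  | .S2 t s => .S2 (EtaC.refl t) (EtaC.refl s)
theorem EtaC.refl : (t : C) → EtaC t t
  | .ret v => .ret (EtaV.refl v)
  | .bull t s => .bull (EtaC.refl t) (EtaC.refl s)
  | .rtri v s => .rtri (EtaV.refl v) (EtaC.refl s)
  | .ltri t v => .ltri (EtaV.refl v) (EtaC.refl t)
  | .circ v w => .circ (EtaV.refl v) (EtaV.refl w)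
end

theorem EtaC.headExpand_stepsC {t t' s : C} (h : StepsC t t') (h' : EtaC t' s) : EtaC t s := by
  induction h using Relation.ReflTransGen.head_induction_on with
  | refl => exact h'
  | head hstep _ ih => exact .headExpand hstep ih

theorem StepsC.bull_left {t t' : C} (s : C) (h : StepsC t t') :
    StepsC (.bull t s) (.bull t' s) :=
  Relation.ReflTransGen.lift (C.bull · s) (fun _ _ => StepC.bullL s) _ _ h

theorem StepsC.ltri_left {t t' : C} (v : V) (h : StepsC t t') :
    StepsC (.ltri t v) (.ltri t' v) :=
  Relation.ReflTransGen.lift (C.ltri · v) (fun _ _ => StepC.ltriL v) _ _ h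

theorem StepsC.rtri_right {s s' : C} (v : V) (h : StepsC s s') :
    StepsC (.rtri v s) (.rtri v s') :=
  Relation.ReflTransGen.lift (C.rtri v) (fun _ _ => StepC.rtriR v) _ _ h

theorem StepsV.rtri_I {s : C} {w : V} (h : StepsV s w) :
    StepsV (.rtri .I s) w := by
  obtain ⟨s', hs, ⟨⟩⟩ := h
  refine ⟨.ret w, (hs.rtri_right .I).trans ?_, .ret w⟩
  exact .head (.rtriV .I (.ret w)) (.single (.circ (.I w)))

theorem LStep.eta (v u : V) :
    LStep (eta v) u (.bull (.ltri (.ret (.K1 (.ret .I))) u) (.ltri (.ret v) u)) :=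
  .S2 _ _ u

theorem stepsC_eta_body (v u : V) :
    StepsC (.bull (.ltri (.ret (.K1 (.ret .I))) u) (.ltri (.ret v) u)) (.rtri .I (.circ v u)) :=
  .head (.bullL _ (.ltriV u (.ret _))) <| .head (.bullL _ (.circ (.K1 _ u))) <|
    .head (.bullV _ (.ret .I)) <| .single (.rtriR .I (.ltriV u (.ret v)))

theorem LStep.det {v u : V} {t t' : C} (h : LStep v u t) (h' : LStep v u t') : t = t' := by
  cases h <;> cases h' <;> rfl

theorem StepC.det {t a b : C} (h : StepC t a) (h' : StepC t b) : a = b := by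
  induction h generalizing b with
  | bullL s h ih => cases h' with
    | bullL _ h' => rw [ih h']
    | bullV _ h' => cases h'; nomatch h
  | bullV s h => cases h; cases h' with
    | bullL _ h' => nomatch h'
    | bullV _ h' => cases h'; rfl
  | ltriL v h ih => cases h' with
    | ltriL _ h' => rw [ih h']
    | ltriV _ h' => cases h'; nomatch h
  | ltriV w h => cases h; cases h' with
    | ltriL _ h' => nomatch h'
    | ltriV _ h' => cases h'; rfl
  | rtriR v h ih => cases h' with
    | rtriR _ h' => rw [ih h']
    | rtriV _ h' => cases h'; nomatch h
  | rtriV v h => cases h; cases h' with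
    | rtriR _ h' => nomatch h'
    | rtriV _ h' => cases h'; rfl
  | circ h => cases h' with
    | circ h' => exact h.det h'

theorem EtaV.lStep_sim : ∀ {v w u z : V} {t : C}, EtaV v w → EtaV u z → LStep v u t →
    ∃ s, StepsC (.circ w z) s ∧ EtaC t s
  | _, _, _, z, _, .S, hu, .S _ => ⟨_, .single (.circ (.S z)), .ret (.S1 (.ret hu))⟩
  | _, _, _, z, _, .K, hu, .K _ => ⟨_, .single (.circ (.K z)), .ret (.K1 (.ret hu))⟩
  | _, _, _, z, _, .I, hu, .I _ => ⟨_, .single (.circ (.I z)), .ret hu⟩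
  | _, _, _, z, _, .K1 ht, _, .K1 _ _ => ⟨_, .single (.circ (.K1 _ z)), ht⟩
  | _, _, _, z, _, .S1 ht, hu, .S1 _ _ =>
      ⟨_, .single (.circ (.S1 _ z)), .ret (.S2 ht (.ret hu))⟩
  | _, _, _, z, _, .S2 ht ht', hu, .S2 _ _ _ =>
      ⟨_, .single (.circ (.S2 _ _ z)), .bull (.ltri hu ht) (.ltri hu ht')⟩
  | _, _, _, z, _, .expand (w := w) hvw, hu, hstep => by
      obtain ⟨s, hs, hts⟩ := hvw.lStep_sim hu hstep
      exact ⟨.rtri .I s, .head (.circ (.eta w z)) ((stepsC_eta_body w z).trans (hs.rtri_right .I)),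
        .idR hts⟩
  | _, _, u, z, _, .contract hvw, hu, .S2 _ _ _ =>
      ⟨_, .refl, (EtaC.idL (.circ hvw hu)).headExpand_stepsC (stepsC_eta_body _ u)⟩

theorem EtaC.stepV_sim : ∀ {t s : C} {v : V}, EtaC t s → StepV t v → ∃ w, StepsV s w ∧ EtaV v w
  | _, _, _, .ret hvw, .ret _ => ⟨_, ⟨_, .refl, .ret _⟩, hvw⟩
  | _, _, _, .idR h, hv => by
      obtain ⟨w, hs, hvw⟩ := h.stepV_sim hv
      exact ⟨w, hs.rtri_I, hvw⟩
  | _, _, _, .headExpand hstep _, .ret _ => nomatch hstep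

theorem EtaC.stepC_sim : ∀ {t s t' : C}, EtaC t s → StepC t t' →
    ∃ s', StepsC s s' ∧ EtaC t' s'
  | _, _, _, .bull h h', .bullL _ hstep => by
      obtain ⟨s', hs, he⟩ := h.stepC_sim hstep
      exact ⟨_, hs.bull_left _, .bull he h'⟩
  | _, _, _, .bull h h', .bullV _ hstep => by
      obtain ⟨w, ⟨s', hs, ⟨⟩⟩, hw⟩ := h.stepV_sim hstep
      exact ⟨_, (hs.bull_left _).tail (.bullV _ (.ret w)), .rtri hw h'⟩
  | _, _, _, .rtri hv h, .rtriR _ hstep => by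
      obtain ⟨s', hs, he⟩ := h.stepC_sim hstep
      exact ⟨_, hs.rtri_right _, .rtri hv he⟩
  | _, _, _, .rtri hv h, .rtriV _ hstep => by
      obtain ⟨w, ⟨s', hs, ⟨⟩⟩, hw⟩ := h.stepV_sim hstep
      exact ⟨_, (hs.rtri_right _).tail (.rtriV _ (.ret w)), .circ hv hw⟩
  | _, _, _, .ltri hv h, .ltriL _ hstep => by
      obtain ⟨s', hs, he⟩ := h.stepC_sim hstep
      exact ⟨_, hs.ltri_left _, .ltri hv he⟩
  | _, _, _, .ltri hv h, .ltriV _ hstep => by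
      obtain ⟨w, ⟨s', hs, ⟨⟩⟩, hw⟩ := h.stepV_sim hstep
      exact ⟨_, (hs.ltri_left _).tail (.ltriV _ (.ret w)), .circ hw hv⟩
  | _, _, _, .circ hv hv', .circ hl => hv.lStep_sim hv' hl
  | _, _, _, .idL h, .rtriR _ hstep => by
      obtain ⟨s', hs, he⟩ := h.stepC_sim hstep
      exact ⟨_, hs, .idL he⟩
  | _, _, _, .idL h, .rtriV _ hstep => by
      obtain ⟨w, ⟨s', hs, ⟨⟩⟩, hw⟩ := h.stepV_sim hstep
      exact ⟨_, hs, .headExpand (.circ (.I _)) (.ret hw)⟩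
  | _, _, _, .idR h, hstep => by
      obtain ⟨s', hs, he⟩ := h.stepC_sim hstep
      exact ⟨_, hs.rtri_right .I, .idR he⟩
  | _, _, _, .headExpand hstep' h, hstep => by
      cases hstep'.det hstep
      exact ⟨_, .refl, h⟩

theorem EtaC.convC {t s : C} (h : EtaC t s) (ht : ConvC t) : ConvC s := by
  obtain ⟨v, t', hsteps, hv⟩ := ht
  induction hsteps using Relation.ReflTransGen.head_induction_on generalizing s with
  | refl =>
      obtain ⟨w, hw, -⟩ := h.stepV_sim hv
      exact ⟨w, hw⟩
  | head hstep _ ih =>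
      obtain ⟨s', hs, he⟩ := h.stepC_sim hstep
      obtain ⟨w, s'', hs', hw⟩ := ih he
      exact ⟨w, s'', hs.trans hs', hw⟩

theorem eta_isCong : IsCong EtaV EtaC :=
  ⟨.S, .K, .I, fun _ _ => .K1, fun _ _ => .S1, fun _ _ _ _ => .S2, fun _ _ => .ret,
    fun _ _ _ _ => .bull, fun _ _ _ _ => .rtri, fun _ _ _ _ hv ht => .ltri hv ht,
    fun _ _ _ _ => .circ⟩

theorem eta_subO : SubO EtaV EtaC :=
  ⟨fun _ _ _ => trivial, fun _ _ => EtaC.convC⟩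

end FG

open FG in
/-- η-law for xCL_fg (value form). -/
theorem fg_eta_law_value :
    ∀ v : V,
      CtxLeV v (.S2 (.ret (.K1 (.ret .I))) (.ret v)) ∧
      CtxLeV (.S2 (.ret (.K1 (.ret .I))) (.ret v)) v := by
  intro v
  exact ⟨⟨EtaV, EtaC, eta_isCong, eta_subO, .expand (.refl v)⟩,
    ⟨EtaV, EtaC, eta_isCong, eta_subO, .contract (.refl v)⟩⟩
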